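/- arXiv:1011.1961 — 5 statements merged into one kernel-verified Lean document; each statement's English description precedes it below -/
import Mathlib

section
/- Let p be a prime not dividing N, let χ_p be the trivial character modulo 1, and let γ, δ ≥ 0 and positive integers d₁, d₂. Define S = Σ*_{d mod p^{γ+δ}, (d₁d ± d₂, p^{γ+δ}) = p^γ} 1. Then S = 1 if δ = 0; S = p^δ − p^{δ−1} if δ > 0 and p | d₁d₂p^γ; and S = p^δ − 2p^{δ−1} if δ > 0 and p ∤ d₁d₂p^γ. (Here we assume the count is nonempty only when (γ > 0 implies p ∤ d₁d₂).) -/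
open Finset

/-!
Write `X d = d₁ d ± d₂` and `m = γ + δ`. When `p ∤ d₁` the congruence `p^k ∣ X d` fixes `d`
modulo `p^k`, so it has `p^(m - k)` solutions below `p^m`; if also `p ∤ d₂` and `k > 0`, every
solution is prime to `p`. For `δ > 0` the condition `gcd(X d, p^m) = p^γ` says `p^γ ∣ X d` but
`p^(γ+1) ∤ X d`, so `S` is a difference of two counts of units `d`. For `γ > 0` both are
congruence counts; for `γ = 0` the first is `φ(p^δ)`, and the second is `p^(δ-1)` if
`p ∤ d₁ d₂` and `0` otherwise, since then coprimality of `d₁, d₂` leaves no unit `d` with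
`p ∣ X d`.
-/

theorem card_filter_range_dvd_mul_add {n k : ℕ} [NeZero k] (hkn : k ∣ n) {a : ℕ}
    (ha : a.Coprime k) (b : ℤ) :
    #{d ∈ range n | (k : ℤ) ∣ a * (d : ℕ) + b} = n / k := by
  set u := ZMod.unitOfCoprime a ha
  have hsol : ∀ d : ℕ, (k : ℤ) ∣ a * d + b ↔ d ≡ (-b * ↑u⁻¹ : ZMod k).val [MOD k] := by
    intro d
    rw [← ZMod.natCast_eq_natCast_iff, ZMod.natCast_zmod_val, Units.eq_mul_inv_iff_mul_eq,
      ZMod.coe_unitOfCoprime, eq_neg_iff_add_eq_zero, ← ZMod.intCast_zmod_eq_zero_iff_dvd]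
    push_cast
    ring_nf
  rw [filter_congr fun d _ => hsol d, ← Nat.count_eq_card_filter_range,
    Nat.count_modEq_card _ (NeZero.pos k), Nat.mod_eq_zero_of_dvd hkn]
  simp

theorem Int.gcd_prime_pow_eq_pow_iff {p : ℕ} (hp : p.Prime) {γ m : ℕ} (hγm : γ ≤ m) (X : ℤ) :
    Int.gcd X (p ^ m : ℕ) = p ^ γ ↔ (p : ℤ) ^ γ ∣ X ∧ (γ < m → ¬ (p : ℤ) ^ (γ + 1) ∣ X) := by
  have hpow_dvd : ∀ {i j : ℕ}, i ≤ j → (p : ℤ) ^ i ∣ (p ^ j : ℕ) := fun h => by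
    push_cast; exact pow_dvd_pow _ h
  constructor
  · intro h
    have hdvd : (p : ℤ) ^ γ ∣ X := by exact_mod_cast h ▸ Int.gcd_dvd_left X (p ^ m : ℕ)
    refine ⟨hdvd, fun hlt hnext => ?_⟩
    have : p ^ (γ + 1) ∣ p ^ γ := h ▸ Int.dvd_gcd (by exact_mod_cast hnext) (hpow_dvd hlt)
    exact Nat.lt_irrefl γ ((Nat.pow_dvd_pow_iff_le_right hp.one_lt).1 this)
  · rintro ⟨hdvd, hmax⟩
    obtain ⟨j, hjm, hj⟩ := (Nat.dvd_prime_pow hp).1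
      (Int.natCast_dvd_natCast.1 (Int.gcd_dvd_right X (p ^ m : ℕ)))
    have hγj : γ ≤ j := (Nat.pow_dvd_pow_iff_le_right hp.one_lt).1
      (hj ▸ Int.dvd_gcd (by exact_mod_cast hdvd) (hpow_dvd hγm))
    have hjγ : j ≤ γ := by
      by_contra! hγj
      have hj_dvd : (p : ℤ) ^ j ∣ X := by exact_mod_cast hj ▸ Int.gcd_dvd_left X (p ^ m : ℕ)
      exact hmax (by omega) ((pow_dvd_pow _ hγj).trans hj_dvd)
    rw [hj, le_antisymm hjγ hγj]

theorem not_dvd_of_dvd_mul_add {p d₁ d₂ d : ℕ} {ε : ℤ} (hε : IsUnit ε) (hd₂ : ¬ p ∣ d₂)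
    (h : (p : ℤ) ∣ d₁ * d + ε * d₂) : ¬ p ∣ d := by
  intro hd
  have : (p : ℤ) ∣ ε * d₂ :=
    (dvd_add_right (dvd_mul_of_dvd_right (Int.natCast_dvd_natCast.2 hd) _)).1 h
  exact hd₂ (Int.natCast_dvd_natCast.1 (hε.dvd_mul_left.1 this))

theorem not_dvd_mul_add_of_dvd_mul {p d₁ d₂ d : ℕ} (hp : p.Prime) {ε : ℤ} (hε : IsUnit ε)
    (h12 : d₁.Coprime d₂) (h : p ∣ d₁ * d₂) (hd : ¬ p ∣ d) :
    ¬ (p : ℤ) ∣ d₁ * d + ε * d₂ := by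
  intro hX
  have not_both : ¬ (p ∣ d₁ ∧ p ∣ d₂) := fun ⟨h₁, h₂⟩ =>
    hp.one_lt.ne' (Nat.eq_one_of_dvd_coprimes h12 h₁ h₂)
  rcases hp.dvd_mul.1 h with h₁ | h₂
  · exact not_both ⟨h₁, Int.natCast_dvd_natCast.1 (hε.dvd_mul_left.1
      ((dvd_add_right (dvd_mul_of_dvd_left (Int.natCast_dvd_natCast.2 h₁) _)).1 hX))⟩
  · have : (p : ℤ) ∣ d₁ * d :=
      (dvd_add_left (dvd_mul_of_dvd_right (Int.natCast_dvd_natCast.2 h₂) _)).1 hX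
    rcases (Nat.prime_iff_prime_int.1 hp).dvd_mul.1 this with h₁ | h
    · exact not_both ⟨Int.natCast_dvd_natCast.1 h₁, h₂⟩
    · exact hd (Int.natCast_dvd_natCast.1 h)

/-- The paper's `S`, with the sign `±` encoded by `ε = ±1`. -/
def localCount (p γ δ d₁ d₂ : ℕ) (ε : ℤ) : ℕ :=
  ((range (p ^ (γ + δ))).filter (fun d =>
    Nat.Coprime d (p ^ (γ + δ)) ∧
    Int.gcd ((d₁ : ℤ) * d + ε * d₂) ((p ^ (γ + δ) : ℕ) : ℤ) = p ^ γ)).card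

section LocalCount

variable {p : ℕ} (hp : p.Prime) {d₁ d₂ : ℕ} {ε : ℤ}
include hp

theorem card_filter_range_pow_dvd (hd₁ : ¬ p ∣ d₁) {k m : ℕ} (hkm : k ≤ m) (b : ℤ) :
    #{d ∈ range (p ^ m) | (p : ℤ) ^ k ∣ d₁ * (d : ℕ) + b} = p ^ (m - k) := by
  have hcop : d₁.Coprime (p ^ k) := (hp.coprime_iff_not_dvd.2 hd₁).symm.pow_right k
  have := NeZero.of_pos (pow_pos hp.pos k)
  have h := card_filter_range_dvd_mul_add (pow_dvd_pow p hkm) hcop b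
  push_cast at h
  rw [h, Nat.pow_div hkm hp.pos]

theorem card_filter_range_not_dvd_and_pow_dvd (hε : IsUnit ε) (hd : ¬ p ∣ d₁ * d₂) {k m : ℕ}
    (hk : 0 < k) (hkm : k ≤ m) :
    #{d ∈ range (p ^ m) | ¬ p ∣ d ∧ (p : ℤ) ^ k ∣ d₁ * (d : ℕ) + ε * d₂} = p ^ (m - k) := by
  rw [← card_filter_range_pow_dvd hp (fun h => hd (dvd_mul_of_dvd_left h _)) hkm]
  refine congrArg card (filter_congr fun d _ => and_iff_right_of_imp fun h => ?_)
  exact not_dvd_of_dvd_mul_add hε (fun h => hd (dvd_mul_of_dvd_right h _))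
    ((dvd_pow_self _ hk.ne').trans h)

theorem localCount_eq_sub {γ δ : ℕ} (hδ : 0 < δ) :
    localCount p γ δ d₁ d₂ ε =
      #{d ∈ range (p ^ (γ + δ)) | ¬ p ∣ d ∧ (p : ℤ) ^ γ ∣ d₁ * (d : ℕ) + ε * d₂} -
        #{d ∈ range (p ^ (γ + δ)) | ¬ p ∣ d ∧ (p : ℤ) ^ (γ + 1) ∣ d₁ * (d : ℕ) + ε * d₂} := by
  have hsub := monotone_filter_right (range (p ^ (γ + δ)))
    (p := fun d : ℕ => ¬ p ∣ d ∧ (p : ℤ) ^ (γ + 1) ∣ d₁ * d + ε * d₂)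
    (q := fun d : ℕ => ¬ p ∣ d ∧ (p : ℤ) ^ γ ∣ d₁ * d + ε * d₂)
    fun _ _ => And.imp_right ((pow_dvd_pow _ γ.le_succ).trans)
  rw [← card_sdiff_of_subset hsub, ← filter_and_not, localCount]
  refine congrArg card (filter_congr fun d _ => ?_)
  rw [Nat.coprime_pow_right_iff (by omega), Nat.coprime_comm, hp.coprime_iff_not_dvd,
    Int.gcd_prime_pow_eq_pow_iff hp (by omega)]
  simp only [show γ < γ + δ by omega, true_implies]
  tauto

theorem card_filter_range_pow_not_dvd {n : ℕ} (hn : 0 < n) :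
    #{d ∈ range (p ^ n) | ¬ p ∣ d} = p ^ n - p ^ (n - 1) := by
  calc #{d ∈ range (p ^ n) | ¬ p ∣ d} = Nat.totient (p ^ n) := by
        rw [Nat.totient_eq_card_coprime]
        exact congrArg card (filter_congr fun d _ => by
          rw [Nat.coprime_pow_left_iff hn, hp.coprime_iff_not_dvd])
    _ = p ^ n - p ^ (n - 1) := by
        rw [Nat.totient_prime_pow hp hn, Nat.mul_sub_one, pow_sub_one_mul hn.ne']

variable (hε : IsUnit ε)
include hε

theorem localCount_of_delta_eq_zero {γ : ℕ} (h : 0 < γ → ¬ p ∣ d₁ * d₂) :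
    localCount p γ 0 d₁ d₂ ε = 1 := by
  rcases Nat.eq_zero_or_pos γ with rfl | hγ
  · simp [localCount]
  calc localCount p γ 0 d₁ d₂ ε
      = #{d ∈ range (p ^ γ) | ¬ p ∣ d ∧ (p : ℤ) ^ γ ∣ d₁ * (d : ℕ) + ε * d₂} :=
        congrArg card (filter_congr fun d _ => by
          rw [add_zero, Nat.coprime_pow_right_iff hγ, Nat.coprime_comm, hp.coprime_iff_not_dvd,
            Int.gcd_prime_pow_eq_pow_iff hp le_rfl]
          simp)
    _ = 1 := by rw [card_filter_range_not_dvd_and_pow_dvd hp hε (h hγ) hγ le_rfl, Nat.sub_self,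
        pow_zero]

theorem localCount_of_pos {γ δ : ℕ} (hγ : 0 < γ) (hδ : 0 < δ) (hd : ¬ p ∣ d₁ * d₂) :
    localCount p γ δ d₁ d₂ ε = p ^ δ - p ^ (δ - 1) := by
  rw [localCount_eq_sub hp hδ, card_filter_range_not_dvd_and_pow_dvd hp hε hd hγ (by omega),
    card_filter_range_not_dvd_and_pow_dvd hp hε hd (by omega) (by omega),
    show γ + δ - γ = δ by omega, show γ + δ - (γ + 1) = δ - 1 by omega]

theorem localCount_zero_of_dvd {δ : ℕ} (hδ : 0 < δ) (h12 : d₁.Coprime d₂) (hd : p ∣ d₁ * d₂) :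
    localCount p 0 δ d₁ d₂ ε = p ^ δ - p ^ (δ - 1) := by
  have hnone : #{d ∈ range (p ^ δ) | ¬ p ∣ d ∧ (p : ℤ) ∣ d₁ * (d : ℕ) + ε * d₂} = 0 :=
    card_eq_zero.2 (filter_eq_empty_iff.2 fun _ _ ⟨hpd, hX⟩ =>
      not_dvd_mul_add_of_dvd_mul hp hε h12 hd hpd hX)
  rw [localCount_eq_sub hp hδ]
  simp only [zero_add, pow_zero, one_dvd, and_true, pow_one]
  rw [hnone, tsub_zero, card_filter_range_pow_not_dvd hp hδ]

theorem localCount_zero_of_not_dvd {δ : ℕ} (hδ : 0 < δ) (hd : ¬ p ∣ d₁ * d₂) :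
    localCount p 0 δ d₁ d₂ ε = p ^ δ - 2 * p ^ (δ - 1) := by
  rw [localCount_eq_sub hp hδ]
  simp only [zero_add, pow_zero, one_dvd, and_true]
  rw [card_filter_range_pow_not_dvd hp hδ,
    card_filter_range_not_dvd_and_pow_dvd hp hε hd one_pos hδ]
  omega

end LocalCount

theorem local_count_trivial_character_general
    (p : ℕ) (hp : p.Prime)
    (γ δ : ℕ) (d₁ d₂ : ℕ)
    (h12 : Nat.Coprime d₁ d₂) (ε : ℤ) (hε : ε = 1 ∨ ε = -1)
    (hnonempty : 0 < γ → ¬ p ∣ d₁ * d₂)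
    (S : ℕ)
    (hS : S = ((Finset.range (p ^ (γ + δ))).filter (fun d =>
        Nat.Coprime d (p ^ (γ + δ)) ∧
        Int.gcd ((d₁ : ℤ) * d + ε * d₂) ((p ^ (γ + δ) : ℕ) : ℤ) = p ^ γ)).card) :
    (δ = 0 → S = 1) ∧
    (0 < δ → p ∣ d₁ * d₂ * p ^ γ → S = p ^ δ - p ^ (δ - 1)) ∧
    (0 < δ → ¬ p ∣ d₁ * d₂ * p ^ γ → S = p ^ δ - 2 * p ^ (δ - 1)) := by
  change S = localCount p γ δ d₁ d₂ ε at hS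
  have hε : IsUnit ε := Int.isUnit_iff.2 hε
  subst hS
  refine ⟨fun hδ => ?_, fun hδ hdvd => ?_, fun hδ hndvd => ?_⟩
  · subst hδ
    exact localCount_of_delta_eq_zero hp hε hnonempty
  · rcases Nat.eq_zero_or_pos γ with rfl | hγ
    · exact localCount_zero_of_dvd hp hε hδ h12 (by simpa using hdvd)
    · exact localCount_of_pos hp hε hγ hδ (hnonempty hγ)
  · obtain rfl : γ = 0 := by
      by_contra hγ
      exact hndvd (dvd_mul_of_dvd_right (dvd_pow_self p hγ) _)
    exact localCount_zero_of_not_dvd hp hε hδ (by simpa using hndvd)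

/-- Local computation at primes `p ∤ N` (trivial character): the count
`S = Σ*_{d mod p^{γ+δ}, (d₁d ± d₂, p^{γ+δ}) = p^γ} 1` equals `1` if `δ = 0`;
`p^δ − p^{δ−1}` if `δ > 0` and `p ∣ d₁d₂p^γ`; and `p^δ − 2p^{δ−1}` if `δ > 0`
and `p ∤ d₁d₂p^γ`.  The sign `ε ∈ {±1}` encodes `±`. -/
theorem local_count_trivial_character
    (p N : ℕ) (hp : p.Prime) (hpN : ¬ p ∣ N)
    (γ δ : ℕ) (d₁ d₂ : ℕ) (hd₁ : 0 < d₁) (hd₂ : 0 < d₂)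
    (h12 : Nat.Coprime d₁ d₂) (ε : ℤ) (hε : ε = 1 ∨ ε = -1)
    (hnonempty : 0 < γ → ¬ p ∣ d₁ * d₂)
    (S : ℕ)
    (hS : S = ((Finset.range (p ^ (γ + δ))).filter (fun d =>
        Nat.Coprime d (p ^ (γ + δ)) ∧
        Int.gcd ((d₁ : ℤ) * d + ε * d₂) ((p ^ (γ + δ) : ℕ) : ℤ) = p ^ γ)).card) :
    (δ = 0 → S = 1) ∧
    (0 < δ → p ∣ d₁ * d₂ * p ^ γ → S = p ^ δ - p ^ (δ - 1)) ∧
    (0 < δ → ¬ p ∣ d₁ * d₂ * p ^ γ → S = p ^ δ - 2 * p ^ (δ - 1)) :=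
  local_count_trivial_character_general p hp γ δ d₁ d₂ h12 ε hε hnonempty S hS
end

section
/- Let p be a prime, ν ≥ 1, and χ a primitive Dirichlet character modulo p^ν. Then Σ*_{d mod p^ν, (d−1, p^ν) = p^{ν−1}} χ(d) = −1. -/
/-!
The condition `(d - 1, p^ν) = p^(ν-1)` says `d ≡ 1 (mod p^(ν-1))` but `d ≢ 1 (mod p^ν)`, and the
coprimality condition can be dropped because `χ` vanishes off the units. So the sum is the sum of
`χ` over the kernel of `(ℤ/p^ν)ˣ → (ℤ/p^(ν-1))ˣ`, minus `χ 1 = 1`. Since `χ` is primitive it does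
not factor through `p^(ν-1)`, i.e. it is nontrivial on that kernel, and so its sum there vanishes.
-/

open Finset

theorem Nat.gcd_prime_pow_eq_pow_iff {p k ν : ℕ} (hp : p.Prime) (hk : k < ν) (y : ℕ) :
    y.gcd (p ^ ν) = p ^ k ↔ p ^ k ∣ y ∧ ¬ p ^ (k + 1) ∣ y := by
  obtain ⟨j, -, hj⟩ := (Nat.dvd_prime_pow hp).mp (Nat.gcd_dvd_right y (p ^ ν))
  have hdvd_gcd : ∀ i ≤ ν, p ^ i ∣ p ^ j ↔ p ^ i ∣ y := fun i hi => by
    rw [← hj, Nat.dvd_gcd_iff, and_iff_left (Nat.pow_dvd_pow p hi)]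
  rw [hj, ← hdvd_gcd k hk.le, ← hdvd_gcd (k + 1) hk, Nat.pow_dvd_pow_iff_le_right hp.one_lt,
    Nat.pow_dvd_pow_iff_le_right hp.one_lt, Nat.pow_right_inj hp.one_lt]
  omega

theorem Int.gcd_sub_one_prime_pow_succ_eq_pow_iff {p k : ℕ} (hp : p.Prime) (x : ℤ) :
    Int.gcd (x - 1) ((p ^ (k + 1) : ℕ) : ℤ) = p ^ k ↔
      (x : ZMod (p ^ k)) = 1 ∧ (x : ZMod (p ^ (k + 1))) ≠ 1 := by
  have hdvd_iff (n : ℕ) : (x : ZMod n) = 1 ↔ n ∣ (x - 1).natAbs := by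
    rw [← Int.natCast_dvd, ← ZMod.intCast_eq_intCast_iff_dvd_sub, Int.cast_one, eq_comm]
  rw [ne_eq, hdvd_iff, hdvd_iff, Int.gcd, Int.natAbs_natCast,
    Nat.gcd_prime_pow_eq_pow_iff hp k.lt_succ_self]

theorem ZMod.sum_range_natCast {N : ℕ} [NeZero N] {M : Type*} [AddCommMonoid M]
    (f : ZMod N → M) : ∑ d ∈ range N, f d = ∑ a, f a :=
  sum_nbij' (fun d => (d : ZMod N)) ZMod.val (fun _ _ => mem_univ _)
    (fun a _ => mem_range.mpr a.val_lt) (fun _ hd => ZMod.val_cast_of_lt (mem_range.mp hd))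
    (fun a _ => ZMod.natCast_zmod_val a) (fun _ _ => rfl)

namespace DirichletCharacter

variable {R : Type*} [CommRing R] {n : ℕ}

theorem ite_coprime_and (χ : DirichletCharacter R n) (d : ℕ) (P : Prop) [Decidable P] :
    (if d.Coprime n ∧ P then χ d else 0) = if P then χ d else 0 := by
  by_cases hd : d.Coprime n
  · exact if_congr (and_iff_right hd) rfl rfl
  · rw [if_neg (fun h => hd h.1), χ.map_nonunit (mt (ZMod.isUnit_iff_coprime d n).mp hd),
      ite_self]

theorem IsPrimitive.not_factorsThrough {χ : DirichletCharacter R n} (hχ : χ.IsPrimitive)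
    {d : ℕ} (hd : d < n) : ¬ χ.FactorsThrough d := fun h =>
  hd.not_ge (hχ ▸ (Nat.sInf_le h : χ.conductor ≤ d))

/-- Multiplying by a unit `u ≡ 1 (mod d)` with `χ u ≠ 1` permutes the summation range. -/
theorem sum_castHom_eq_one_eq_zero [NoZeroDivisors R] [NeZero n] {d : ℕ} (hd : d ∣ n)
    (χ : DirichletCharacter R n) (hχ : ¬ χ.FactorsThrough d) :
    ∑ a with ZMod.castHom hd (ZMod d) a = 1, χ a = 0 := by
  set T : Finset (ZMod n) := {a | ZMod.castHom hd (ZMod d) a = 1}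
  have hmul_mem {v : (ZMod n)ˣ} (hv : v ∈ (ZMod.unitsMap hd).ker) {a : ZMod n} (ha : a ∈ T) :
      ↑v * a ∈ T := by
    simp only [T, mem_filter, mem_univ, true_and, map_mul] at ha ⊢
    rw [show ZMod.castHom hd (ZMod d) v = 1 from congrArg Units.val hv, ha, one_mul]
  obtain ⟨u, hu, hχu⟩ := SetLike.not_le_iff_exists.mp
    (mt (factorsThrough_iff_ker_unitsMap hd).mpr hχ)
  have hshift : ∑ a ∈ T, χ (u * a) = ∑ a ∈ T, χ a :=
    sum_nbij' (u * ·) (↑u⁻¹ * ·) (fun _ => hmul_mem hu) (fun _ => hmul_mem (inv_mem hu))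
      (fun a _ => u.inv_mul_cancel_left a) (fun a _ => u.mul_inv_cancel_left a) (fun _ _ => rfl)
  simp only [map_mul, ← mul_sum] at hshift
  exact (mul_left_eq_self₀.mp hshift).resolve_left fun h => hχu (Units.ext h)

end DirichletCharacter

/-- For a primitive Dirichlet character `χ` modulo `p^ν`, the sum of `χ(d)` over
reduced residues `d` mod `p^ν` with `(d − 1, p^ν) = p^{ν−1}` equals `−1`. -/
theorem primitive_character_sum_neg_one
    (p ν : ℕ) (hp : p.Prime) (hν : 1 ≤ ν)
    (χ : DirichletCharacter ℂ (p ^ ν)) (hχ : χ.IsPrimitive) :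
    (∑ d ∈ Finset.range (p ^ ν),
        if Nat.Coprime d (p ^ ν) ∧
            Int.gcd ((d : ℤ) - 1) ((p ^ ν : ℕ) : ℤ) = p ^ (ν - 1) then
          χ ((d : ℕ) : ZMod (p ^ ν)) else 0) = -1 := by
  obtain ⟨k, rfl⟩ := Nat.exists_eq_add_of_le' hν
  have : NeZero (p ^ (k + 1)) := ⟨pow_ne_zero _ hp.ne_zero⟩
  have hdvd : p ^ k ∣ p ^ (k + 1) := pow_dvd_pow p k.le_succ
  have hlt : p ^ k < p ^ (k + 1) := Nat.pow_lt_pow_right hp.one_lt k.lt_succ_self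
  set S : Finset (ZMod (p ^ (k + 1))) := {a | ZMod.castHom hdvd (ZMod (p ^ k)) a = 1}
  have hcond (d : ℕ) : Int.gcd ((d : ℤ) - 1) ((p ^ (k + 1) : ℕ) : ℤ) = p ^ (k + 1 - 1) ↔
      (d : ZMod (p ^ (k + 1))) ∈ S.erase 1 := by
    rw [Nat.add_sub_cancel, Int.gcd_sub_one_prime_pow_succ_eq_pow_iff hp]
    simp only [S, mem_erase, mem_filter, mem_univ, true_and, map_natCast, Int.cast_natCast]
    exact and_comm
  calc _ = ∑ d ∈ range (p ^ (k + 1)),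
        if (d : ZMod (p ^ (k + 1))) ∈ S.erase 1 then χ d else 0 :=
        sum_congr rfl fun d _ => (χ.ite_coprime_and d _).trans (if_congr (hcond d) rfl rfl)
    _ = ∑ a ∈ S, χ a - χ 1 := by
        rw [ZMod.sum_range_natCast (fun a => if a ∈ S.erase 1 then χ a else 0), sum_ite_mem,
          univ_inter, sum_erase_eq_sub (show 1 ∈ S from mem_filter.mpr ⟨mem_univ _, map_one _⟩)]
    _ = -1 := by
        rw [χ.sum_castHom_eq_one_eq_zero hdvd (hχ.not_factorsThrough hlt), map_one, zero_sub]
end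

section
/- For complex λ, μ with Re λ > 1 and Re μ > 1, and a prime p, one has the Euler factor identity: (1 − p^{−λ−μ})^{−1} [ Σ_{γ≥0} p^{−γμ} + ((p−2)/p) Σ_{δ≥1} p^{−δ(λ−1)} + ((p−1)/p) Σ_{γ≥1} Σ_{δ≥1} p^{−γμ−δ(λ−1)} + 2 (Σ_{α≥1} p^{−αλ}) (1 + ((p−1)/p) Σ_{δ≥1} p^{−δ(λ−1)}) ] = (1 − p^{1−λ})^{−1} (1 − p^{−μ})^{−1}. -/
/-!
With `x = p^{-μ}`, `z = p^{-λ}` and `y = p^{1-λ} = p z`, every series is geometric of ratio of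
norm `< 1`: the first sum is `1/(1-x)`, the shifted sums are `y/(1-y)` and `z/(1-z)`, and the
double sum factors as `x/(1-x) · y/(1-y)`. The identity is then a rational-function identity in
`p`, `x`, `z`, checked by clearing denominators.
-/

open Complex

section GeometricCpow

variable {n : ℕ} {s t w : ℂ}

lemma norm_natCast_cpow_lt_one (hn : 1 < n) (hw : w.re < 0) : ‖(n : ℂ) ^ w‖ < 1 := by
  rw [norm_natCast_cpow_of_pos (by omega)]
  exact Real.rpow_lt_one_of_one_lt_of_neg (by exact_mod_cast hn) hw

lemma one_sub_natCast_cpow_ne_zero (hn : 1 < n) (hw : w.re < 0) : 1 - (n : ℂ) ^ w ≠ 0 := by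
  intro h
  have := norm_natCast_cpow_lt_one hn hw
  rw [← sub_eq_zero.mp h, norm_one] at this
  exact lt_irrefl 1 this

lemma tsum_natCast_cpow_neg_mul (hn : 1 < n) (hs : 0 < s.re) :
    ∑' k : ℕ, (n : ℂ) ^ (-(k : ℂ) * s) = (1 - (n : ℂ) ^ (-s))⁻¹ := by
  simp_rw [neg_mul, ← mul_neg, cpow_nat_mul]
  exact tsum_geometric_of_norm_lt_one (norm_natCast_cpow_lt_one hn (by simpa using hs))

lemma tsum_natCast_cpow_neg_succ_mul (hn : 1 < n) (hs : 0 < s.re) :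
    ∑' k : ℕ, (n : ℂ) ^ (-((k : ℂ) + 1) * s) =
      (n : ℂ) ^ (-s) / (1 - (n : ℂ) ^ (-s)) := by
  have hn0 : (n : ℂ) ≠ 0 := by exact_mod_cast (show n ≠ 0 by omega)
  have hterm (k : ℕ) :
      (n : ℂ) ^ (-((k : ℂ) + 1) * s) = (n : ℂ) ^ (-s) * (n : ℂ) ^ (-(k : ℂ) * s) := by
    rw [← cpow_add _ _ hn0]
    ring_nf
  simp_rw [hterm, tsum_mul_left, tsum_natCast_cpow_neg_mul hn hs, div_eq_mul_inv]

lemma tsum_tsum_natCast_cpow_neg_succ_mul_sub (hn : 1 < n) (hs : 0 < s.re) (ht : 0 < t.re) :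
    ∑' j : ℕ, ∑' k : ℕ, (n : ℂ) ^ (-((j : ℂ) + 1) * s - ((k : ℂ) + 1) * t) =
      (n : ℂ) ^ (-s) / (1 - (n : ℂ) ^ (-s)) * ((n : ℂ) ^ (-t) / (1 - (n : ℂ) ^ (-t))) := by
  have hn0 : (n : ℂ) ≠ 0 := by exact_mod_cast (show n ≠ 0 by omega)
  have hterm (j k : ℕ) : (n : ℂ) ^ (-((j : ℂ) + 1) * s - ((k : ℂ) + 1) * t) =
      (n : ℂ) ^ (-((j : ℂ) + 1) * s) * (n : ℂ) ^ (-((k : ℂ) + 1) * t) := by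
    rw [← cpow_add _ _ hn0]
    ring_nf
  simp_rw [hterm, tsum_mul_left, tsum_natCast_cpow_neg_succ_mul hn ht, tsum_mul_right,
    tsum_natCast_cpow_neg_succ_mul hn hs]

end GeometricCpow

lemma euler_factor_rational_identity {q x z : ℂ} (hq : q ≠ 0) (hx : 1 - x ≠ 0)
    (hz : 1 - z ≠ 0) (hzq : 1 - z * q ≠ 0) (hzx : 1 - z * x ≠ 0) :
    (1 - z * x)⁻¹ * ((1 - x)⁻¹ + (q - 2) / q * (z * q / (1 - z * q)) +
      (q - 1) / q * (x / (1 - x) * (z * q / (1 - z * q))) +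
      2 * (z / (1 - z)) * (1 + (q - 1) / q * (z * q / (1 - z * q)))) =
    (1 - z * q)⁻¹ * (1 - x)⁻¹ := by
  field_simp
  ring

/-- Evaluation of the Euler factor of `Ξ_r^±(s)` at primes `p ∤ N`. -/
theorem euler_factor_unramified (p : ℕ) (hp : p.Prime) (lam mu : ℂ)
    (hlam : 1 < lam.re) (hmu : 1 < mu.re) :
    (1 - (p : ℂ) ^ (-lam - mu))⁻¹ *
      ((∑' γ : ℕ, (p : ℂ) ^ (-(γ : ℂ) * mu)) +
        (((p : ℂ) - 2) / p) * ∑' δ : ℕ, (p : ℂ) ^ (-((δ : ℂ) + 1) * (lam - 1)) +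
        (((p : ℂ) - 1) / p) *
          ∑' γ : ℕ, ∑' δ : ℕ,
            (p : ℂ) ^ (-((γ : ℂ) + 1) * mu - ((δ : ℂ) + 1) * (lam - 1)) +
        2 * (∑' α : ℕ, (p : ℂ) ^ (-((α : ℂ) + 1) * lam)) *
          (1 + (((p : ℂ) - 1) / p) * ∑' δ : ℕ, (p : ℂ) ^ (-((δ : ℂ) + 1) * (lam - 1)))) =
    (1 - (p : ℂ) ^ (1 - lam))⁻¹ * (1 - (p : ℂ) ^ (-mu))⁻¹ := by
  have hp1 := hp.one_lt
  have hp0 : (p : ℂ) ≠ 0 := by exact_mod_cast hp.ne_zero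
  have hlam0 : 0 < lam.re := by linarith
  have hmu0 : 0 < mu.re := by linarith
  have hlam1 : 0 < (lam - 1).re := by simpa using hlam
  have hshift : (p : ℂ) ^ (-(lam - 1)) = (p : ℂ) ^ (-lam) * p := by
    rw [neg_sub, sub_eq_neg_add, cpow_add _ _ hp0, cpow_one, mul_comm]
  have hsplit : (p : ℂ) ^ (-lam - mu) = (p : ℂ) ^ (-lam) * (p : ℂ) ^ (-mu) := by
    rw [sub_eq_add_neg, cpow_add _ _ hp0]
  have hx := one_sub_natCast_cpow_ne_zero hp1 (w := -mu) (by simpa using hmu0)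
  have hz := one_sub_natCast_cpow_ne_zero hp1 (w := -lam) (by simpa using hlam0)
  have hzq := one_sub_natCast_cpow_ne_zero hp1 (w := -(lam - 1)) (by simpa using hlam1)
  have hzx := one_sub_natCast_cpow_ne_zero hp1 (w := -lam - mu)
    (by simp only [sub_re, neg_re]; linarith)
  rw [hshift] at hzq
  rw [hsplit] at hzx
  rw [tsum_natCast_cpow_neg_mul hp1 hmu0, tsum_natCast_cpow_neg_succ_mul hp1 hlam1,
    tsum_tsum_natCast_cpow_neg_succ_mul_sub hp1 hmu0 hlam1,
    tsum_natCast_cpow_neg_succ_mul hp1 hlam0, show (1 : ℂ) - lam = -(lam - 1) by ring, hshift,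
    hsplit]
  exact euler_factor_rational_identity hp0 hx hz hzq hzx
end

section
/- For any M ≥ 2, Σ_{m < n ≤ M, m ≠ n} 1/(m n |log(n/m)|) ≪ (log M)². -/
/-!
Since `log t ≥ 1 - 1/t`, each term satisfies `1/(m n log(n/m)) ≤ 1/(m (n - m))`, and by partial
fractions and the symmetry `m ↔ n - m` the inner sum of these is `(2/n) H_{n-1} ≤ (2/n) H_M`.
Summing over `n ≤ M` gives at most `2 H_M² ≤ 2 (1 + log M)²`, which is `≪ (log M)²` for `M ≥ 2`.
-/

open Finset Real

lemma sum_Icc_one_div_le_one_add_log (N : ℕ) :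
    ∑ m ∈ Icc 1 N, 1 / (m : ℝ) ≤ 1 + log N := by
  have h := harmonic_le_one_add_log N
  simpa only [harmonic_eq_sum_Icc, Rat.cast_sum, Rat.cast_inv, Rat.cast_natCast, one_div] using h

lemma one_div_mul_mul_abs_log_div_le {x y : ℝ} (hx : 0 < x) (hxy : x < y) :
    1 / (x * y * |log (y / x)|) ≤ 1 / (x * (y - x)) := by
  have hy : 0 < y := hx.trans hxy
  have hlog : (y - x) / y ≤ log (y / x) := by
    have h := one_sub_inv_le_log_of_pos (div_pos hy hx)
    rwa [inv_div, one_sub_div hy.ne'] at h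
  rw [abs_of_pos (log_pos ((one_lt_div hx).mpr hxy))]
  apply one_div_le_one_div_of_le (mul_pos hx (sub_pos.mpr hxy))
  calc x * (y - x) = x * y * ((y - x) / y) := by field_simp
    _ ≤ x * y * log (y / x) := by gcongr

lemma sum_Ico_one_div_sub_eq (n : ℕ) :
    ∑ m ∈ Ico 1 n, 1 / ((n : ℝ) - m) = ∑ m ∈ Ico 1 n, 1 / (m : ℝ) := by
  have h := sum_Ico_reflect (fun m : ℕ => 1 / (m : ℝ)) 1 n.le_succ
  rw [Nat.add_sub_cancel_left, Nat.add_sub_cancel] at h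
  rw [← h]
  refine sum_congr rfl fun m hm => ?_
  rw [Nat.cast_sub (mem_Ico.mp hm).2.le]

lemma sum_Ico_one_div_mul_sub_eq (n : ℕ) :
    ∑ m ∈ Ico 1 n, 1 / ((m : ℝ) * (n - m)) = 2 / n * ∑ m ∈ Ico 1 n, 1 / (m : ℝ) := by
  have partial_fractions : ∀ m ∈ Ico 1 n,
      1 / ((m : ℝ) * (n - m)) = 1 / n * (1 / (m : ℝ) + 1 / ((n : ℝ) - m)) := by
    intro m hm
    obtain ⟨hm1, hmn⟩ := mem_Ico.mp hm
    have hm0 : (m : ℝ) ≠ 0 := by exact_mod_cast (by omega : m ≠ 0)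
    have hn0 : (n : ℝ) ≠ 0 := by exact_mod_cast (by omega : n ≠ 0)
    have hnm : (n : ℝ) - m ≠ 0 := sub_ne_zero.mpr (by exact_mod_cast hmn.ne')
    field_simp
    ring
  rw [sum_congr rfl partial_fractions, ← mul_sum, sum_add_distrib, sum_Ico_one_div_sub_eq]
  ring

lemma one_add_log_le_mul_log {x : ℝ} (hx : 2 ≤ x) :
    1 + log x ≤ (1 + 1 / log 2) * log x := by
  have hlog2 : 0 < log 2 := log_pos one_lt_two
  have hlogx : log 2 ≤ log x := log_le_log two_pos hx
  have h : 1 ≤ log x / log 2 := (one_le_div hlog2).mpr hlogx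
  rw [add_mul, one_mul, one_div_mul_eq_div, add_comm]
  linarith

/-- `Σ_{m < n ≤ M} 1/(m n |log(n/m)|) ≪ (log M)²`. -/
theorem off_diagonal_log_sum_bound :
    ∃ C : ℝ, 0 < C ∧ ∀ M : ℕ, 2 ≤ M →
      (∑ n ∈ Finset.Icc 1 M, ∑ m ∈ Finset.Ico 1 n,
          1 / ((m : ℝ) * n * |Real.log ((n : ℝ) / m)|)) ≤
        C * (Real.log M) ^ 2 := by
  refine ⟨2 * (1 + 1 / log 2) ^ 2, by positivity, fun M hM => ?_⟩
  have hH := sum_Icc_one_div_le_one_add_log M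
  have hlogM : 0 ≤ log M := log_nonneg (by exact_mod_cast one_le_two.trans hM)
  have inner_le : ∀ n ∈ Icc 1 M, ∑ m ∈ Ico 1 n, 1 / (m : ℝ) ≤ 1 + log M := fun n hn =>
    (sum_le_sum_of_subset_of_nonneg (Ico_subset_Icc_self.trans (Icc_subset_Icc_right
      (mem_Icc.mp hn).2)) fun _ _ _ => by positivity).trans hH
  calc (∑ n ∈ Icc 1 M, ∑ m ∈ Ico 1 n, 1 / ((m : ℝ) * n * |log ((n : ℝ) / m)|))
      ≤ ∑ n ∈ Icc 1 M, ∑ m ∈ Ico 1 n, 1 / ((m : ℝ) * (n - m)) := by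
        refine sum_le_sum fun n _ => sum_le_sum fun m hm => ?_
        obtain ⟨hm1, hmn⟩ := mem_Ico.mp hm
        exact one_div_mul_mul_abs_log_div_le (by exact_mod_cast hm1) (by exact_mod_cast hmn)
    _ = ∑ n ∈ Icc 1 M, 2 / (n : ℝ) * ∑ m ∈ Ico 1 n, 1 / (m : ℝ) := by
        simp only [sum_Ico_one_div_mul_sub_eq]
    _ ≤ ∑ n ∈ Icc 1 M, 2 / (n : ℝ) * (1 + log M) := by
        gcongr with n hn
        exact inner_le n hn
    _ = 2 * (∑ n ∈ Icc 1 M, 1 / (n : ℝ)) * (1 + log M) := by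
        rw [← sum_mul, mul_sum]; simp only [mul_one_div]
    _ ≤ 2 * ((1 + 1 / log 2) * log M) ^ 2 := by
        have h := one_add_log_le_mul_log (x := M) (by exact_mod_cast hM)
        nlinarith
    _ = 2 * (1 + 1 / log 2) ^ 2 * log M ^ 2 := by ring
end

section
/- Let χ be a primitive Dirichlet character mod N, let d₁, d₂, c be positive integers with (d₁,d₂)=1 and N | c. Then S_χ(m₁, m₂, c) = (φ(c)/φ(d₁d₂c)) S_χ(d₁d₂ m₁, d₁d₂ m₂, d₁d₂ c), where S_χ(m,n,c) = Σ*_{d mod c} χ(d) e((m d̄ + n d)/c) is the twisted Kloosterman sum. -/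
open Complex Finset

/-!
Reduction modulo `c` maps `(ZMod (k * c))ˣ` onto `(ZMod c)ˣ`, and all its fibres have the same
size `φ(k c) / φ(c)`. The summand of `S_χ(k m, k n, k c)` at `v` only depends on `v mod c`: `χ`
has modulus dividing `c`, and `e(k x / (k c)) = e(x / c)`. Summing over the fibres gives the
identity with `k = d₁ d₂`.
-/

/-- The twisted Kloosterman sum `S_χ(m,n,c) = Σ*_{d mod c} χ(d) e((m d̄ + n d)/c)`,
where `χ` is viewed mod `c` via `N ∣ c`. -/
noncomputable def twistedKloosterman (N : ℕ) (χ : DirichletCharacter ℂ N)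
    (m n c : ℕ) : ℂ :=
  ∑ d ∈ Finset.range c,
    if Nat.Coprime d c then
      χ ((d : ℕ) : ZMod N) *
        Complex.exp (2 * Real.pi * Complex.I *
          ((m : ℂ) * (((d : ZMod c)⁻¹).val : ℂ) + (n : ℂ) * d) / c)
    else 0

theorem MonoidHom.sum_comp_of_surjective {G H M : Type*} [Group G] [Fintype G]
    [Group H] [Fintype H] [DecidableEq H] [AddCommMonoid M] (f : G →* H)
    (hf : Function.Surjective f) (F : H → M) :
    ∑ g, F (f g) = #{g | f g = 1} • ∑ h, F h := by
  rw [← sum_fiberwise univ f, smul_sum]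
  refine sum_congr rfl fun h _ => ?_
  rw [sum_congr rfl fun g hg => congrArg F (mem_filter.mp hg).2, sum_const,
    card_fiber_eq_of_mem_range f (hf h) ⟨1, map_one f⟩]

theorem MonoidHom.card_smul_sum_comp_of_surjective {G H M : Type*} [Group G] [Fintype G]
    [Group H] [Fintype H] [DecidableEq H] [AddCommMonoid M] (f : G →* H)
    (hf : Function.Surjective f) (F : H → M) :
    Fintype.card H • ∑ g, F (f g) = Fintype.card G • ∑ h, F h := by
  have hcard : Fintype.card G = #{g | f g = 1} * Fintype.card H := by
    simpa [mul_comm] using f.sum_comp_of_surjective hf fun _ => (1 : ℕ)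
  rw [f.sum_comp_of_surjective hf, hcard, smul_comm, mul_smul]

theorem ZMod.stdAddChar_natCast_mul (k c : ℕ) [NeZero k] [NeZero c] (x : ZMod (k * c)) :
    stdAddChar ((k : ZMod (k * c)) * x) = stdAddChar (ZMod.cast x : ZMod c) := by
  obtain ⟨j, rfl⟩ := ZMod.intCast_surjective x
  rw [ZMod.cast_intCast (dvd_mul_left c k), ← Int.cast_natCast, ← Int.cast_mul,
    stdAddChar_coe, stdAddChar_coe]
  congr 1
  have hk : (k : ℂ) ≠ 0 := Nat.cast_ne_zero.mpr (NeZero.ne k)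
  push_cast
  field_simp

theorem twistedKloosterman_eq_sum_units (N : ℕ) (χ : DirichletCharacter ℂ N) (m n c : ℕ)
    [NeZero c] :
    twistedKloosterman N χ m n c =
      ∑ u : (ZMod c)ˣ, χ (ZMod.cast (u : ZMod c)) *
        ZMod.stdAddChar ((m : ZMod c) * ((u⁻¹ : (ZMod c)ˣ) : ZMod c) +
          (n : ZMod c) * (u : ZMod c)) := by
  rw [twistedKloosterman, ← sum_filter]
  refine sum_bij' (fun d hd => ZMod.unitOfCoprime d (mem_filter.mp hd).2)
    (fun u _ => (u : ZMod c).val) (fun _ _ => mem_univ _)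
    (fun u _ => mem_filter.mpr ⟨mem_range.mpr (ZMod.val_lt _), ZMod.val_coe_unit_coprime u⟩)
    (fun d hd => ZMod.val_cast_of_lt (mem_range.mp (mem_filter.mp hd).1))
    (fun u _ => Units.ext (by simp)) fun d hd => ?_
  obtain ⟨hdc, hcop⟩ := mem_filter.mp hd
  have hval : (d : ZMod c).val = d := ZMod.val_cast_of_lt (mem_range.mp hdc)
  have hinv : (d : ZMod c)⁻¹ = ↑(ZMod.unitOfCoprime d hcop)⁻¹ := by
    rw [← ZMod.coe_unitOfCoprime d hcop, ZMod.inv_coe_unit]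
  have harg : (m : ZMod c) * (d : ZMod c)⁻¹ + (n : ZMod c) * d =
      ((m * ((d : ZMod c)⁻¹).val + n * d : ℤ) : ZMod c) := by
    push_cast
    rw [ZMod.natCast_zmod_val]
  rw [ZMod.coe_unitOfCoprime, ZMod.cast_eq_val, hval, ← hinv, harg, ZMod.stdAddChar_coe]
  push_cast
  ring_nf

theorem totient_mul_twistedKloosterman_mul {N : ℕ} (χ : DirichletCharacter ℂ N) (m n c : ℕ)
    (hNc : N ∣ c) (k : ℕ) [NeZero k] [NeZero c] :
    (c.totient : ℂ) * twistedKloosterman N χ (k * m) (k * n) (k * c) =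
      (k * c).totient * twistedKloosterman N χ m n c := by
  have hdvd : c ∣ k * c := dvd_mul_left c k
  let F (u : (ZMod c)ˣ) : ℂ := χ (ZMod.cast (u : ZMod c)) *
    ZMod.stdAddChar ((m : ZMod c) * ((u⁻¹ : (ZMod c)ˣ) : ZMod c) + (n : ZMod c) * (u : ZMod c))
  have hterm (v : (ZMod (k * c))ˣ) :
      χ (ZMod.cast (v : ZMod (k * c))) *
        ZMod.stdAddChar (((k * m : ℕ) : ZMod (k * c)) *
            ((v⁻¹ : (ZMod (k * c))ˣ) : ZMod (k * c)) +
          ((k * n : ℕ) : ZMod (k * c)) * (v : ZMod (k * c))) = F (ZMod.unitsMap hdvd v) := by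
    have hχ : (ZMod.cast (ZMod.cast (v : ZMod (k * c)) : ZMod c) : ZMod N) =
        ZMod.cast (v : ZMod (k * c)) :=
      RingHom.congr_fun (ZMod.castHom_comp hNc hdvd) _
    have harg : ((k * m : ℕ) : ZMod (k * c)) * ((v⁻¹ : (ZMod (k * c))ˣ) : ZMod (k * c)) +
        ((k * n : ℕ) : ZMod (k * c)) * (v : ZMod (k * c)) =
        k * (m * ((v⁻¹ : (ZMod (k * c))ˣ) : ZMod (k * c)) + n * (v : ZMod (k * c))) := by
      push_cast; ring
    simp only [F]
    rw [← map_inv, ZMod.unitsMap_val, ZMod.unitsMap_val, hχ, harg,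
      ZMod.stdAddChar_natCast_mul, ZMod.cast_add hdvd, ZMod.cast_mul hdvd, ZMod.cast_mul hdvd,
      ZMod.cast_natCast hdvd, ZMod.cast_natCast hdvd]
  rw [twistedKloosterman_eq_sum_units, twistedKloosterman_eq_sum_units,
    sum_congr rfl fun v _ => hterm v, ← ZMod.card_units_eq_totient,
    ← ZMod.card_units_eq_totient, ← nsmul_eq_mul, ← nsmul_eq_mul]
  exact (ZMod.unitsMap hdvd).card_smul_sum_comp_of_surjective (ZMod.unitsMap_surjective hdvd) F

theorem twisted_kloosterman_level_raising_general
    (N : ℕ) (χ : DirichletCharacter ℂ N)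
    (d₁ d₂ c m₁ m₂ : ℕ) (hd₁ : 0 < d₁) (hd₂ : 0 < d₂) (hc : 0 < c)
    (hNc : N ∣ c) :
    twistedKloosterman N χ m₁ m₂ c =
      ((Nat.totient c : ℂ) / (Nat.totient (d₁ * d₂ * c) : ℂ)) *
        twistedKloosterman N χ (d₁ * d₂ * m₁) (d₁ * d₂ * m₂) (d₁ * d₂ * c) := by
  have : NeZero (d₁ * d₂) := ⟨(Nat.mul_pos hd₁ hd₂).ne'⟩
  have : NeZero c := ⟨hc.ne'⟩
  have htotient : ((d₁ * d₂ * c).totient : ℂ) ≠ 0 :=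
    Nat.cast_ne_zero.mpr (Nat.totient_pos.mpr (Nat.pos_of_neZero _)).ne'
  rw [div_mul_eq_mul_div, totient_mul_twistedKloosterman_mul χ m₁ m₂ c hNc,
    mul_div_cancel_left₀ _ htotient]

/-- `S_χ(m₁, m₂, c) = (φ(c)/φ(d₁d₂c)) S_χ(d₁d₂m₁, d₁d₂m₂, d₁d₂c)` for a
primitive character `χ` mod `N` with `N ∣ c` and `(d₁, d₂) = 1`. -/
theorem twisted_kloosterman_level_raising
    (N : ℕ) (hN : 0 < N) (χ : DirichletCharacter ℂ N) (hχ : χ.IsPrimitive)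
    (d₁ d₂ c m₁ m₂ : ℕ) (hd₁ : 0 < d₁) (hd₂ : 0 < d₂) (hc : 0 < c)
    (h12 : Nat.Coprime d₁ d₂) (hNc : N ∣ c) :
    twistedKloosterman N χ m₁ m₂ c =
      ((Nat.totient c : ℂ) / (Nat.totient (d₁ * d₂ * c) : ℂ)) *
        twistedKloosterman N χ (d₁ * d₂ * m₁) (d₁ * d₂ * m₂) (d₁ * d₂ * c) :=
  twisted_kloosterman_level_raising_general N χ d₁ d₂ c m₁ m₂ hd₁ hd₂ hc hNc
end
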